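/- arXiv:1110.0304 — 4 statements merged into one kernel-verified Lean document; each statement's English description precedes it below -/
import Mathlib

section
/- If A is reducible to itself with tiny use (A ≤_{T(tu)} A), then A is computable. -/
open scoped Classical
open Filter

/-- The prefix of length `n` of a set (element of Cantor space), as a binary string. -/
def opre (B : ℕ → Bool) (n : ℕ) : List Bool := (List.range n).map B

/-- An order function: computable, nondecreasing and unbounded. -/
def IsOrder (f : ℕ → ℕ) : Prop := Computable f ∧ Monotone f ∧ ∀ m, ∃ n, m ≤ f n

/-- The discrete inverse of a nondecreasing unbounded function:
`discInv f k` is the greatest `n` with `f n ≤ k`. -/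
noncomputable def discInv (f : ℕ → ℕ) (k : ℕ) : ℕ := sSup {n | f n ≤ k}

/-- There is a Turing reduction computing the function `f` from the set oracle `B`
whose use on input `n` is bounded by `u n`: a monotone partial computable
string functional which computes `f n` from the prefix `B↾(u n)`. -/
def RedUse (f : ℕ → ℕ) (B : ℕ → Bool) (u : ℕ → ℕ) : Prop :=
  ∃ F : List Bool → ℕ →. ℕ, Partrec₂ F ∧
    (∀ (σ τ : List Bool) (n y : ℕ), σ <+: τ → y ∈ F σ n → y ∈ F τ n) ∧
    ∀ n, f n ∈ F (opre B (u n)) n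

/-- A set, viewed as a `ℕ`-valued function. -/
def natOf (A : ℕ → Bool) : ℕ → ℕ := fun n => cond (A n) 1 0

/-- Turing reduction of the set `A` to the set `B` with use bounded by `u`. -/
def SRedUse (A B : ℕ → Bool) (u : ℕ → ℕ) : Prop := RedUse (natOf A) B u

/-- Turing reducibility of a function to a set. -/
def TRed (f : ℕ → ℕ) (B : ℕ → Bool) : Prop := ∃ u, RedUse f B u

/-- Weak truth-table reducibility of a function to a set: the use is computably bounded. -/
def WttRed (f : ℕ → ℕ) (B : ℕ → Bool) : Prop := ∃ u, Computable u ∧ RedUse f B u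

/-- Weak truth-table reducibility between sets. -/
def SWttRed (A B : ℕ → Bool) : Prop := WttRed (natOf A) B

/-- `A` is reducible to `B` with tiny use: for every order function `h` there is
a Turing reduction of `A` to `B` with use bounded by `h`. -/
def TtuRed (A B : ℕ → Bool) : Prop := ∀ h, IsOrder h → SRedUse A B h

/-- `A` is uniformly reducible to `B` with tiny use: a single Turing reduction of
`A` to `B` whose use function is dominated by every order function. -/
def UTtuRed (A B : ℕ → Bool) : Prop :=
  ∃ u : ℕ → ℕ, (∀ h, IsOrder h → ∀ᶠ n in atTop, u n ≤ h n) ∧ SRedUse A B u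

/-- The effective join of two sets. -/
def join (A B : ℕ → Bool) : ℕ → Bool := fun n => if n % 2 = 0 then A (n / 2) else B (n / 2)

/-- The halting set `K = {e : φ_e(e)↓}`. -/
noncomputable def Khalt : ℕ → Bool := fun e =>
  decide (((Denumerable.ofNat Nat.Partrec.Code e).eval e).Dom)

/-- `U` is an optimal machine (for plain Kolmogorov complexity on binary strings). -/
def Optimal (U : List Bool →. List Bool) : Prop :=
  Partrec U ∧ ∀ M : List Bool →. List Bool, Partrec M →
    ∃ c, ∀ (p x : List Bool), x ∈ M p → ∃ q : List Bool, q.length ≤ p.length + c ∧ x ∈ U q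

/-- Plain Kolmogorov complexity of a string relative to the machine `U`. -/
noncomputable def Cplx (U : List Bool →. List Bool) (x : List Bool) : ℕ :=
  sInf { k | ∃ p : List Bool, p.length = k ∧ x ∈ U p }

/-- Kolmogorov complexity of a natural number (coded as a binary string). -/
noncomputable def CplxN (U : List Bool →. List Bool) (n : ℕ) : ℕ := Cplx U (Nat.bits n)

/-- `A` is anti-complex: for every order function `f`, `C(A↾f(n)) ≤ n` for almost all `n`. -/
def AntiComplex (U : List Bool →. List Bool) (A : ℕ → Bool) : Prop :=
  ∀ f, IsOrder f → ∀ᶠ n in atTop, Cplx U (opre A (f n)) ≤ n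

/-- `g_A(k)` is the least `n` such that `C(A↾m) > k` for all `m ≥ n`. -/
noncomputable def gA (U : List Bool →. List Bool) (A : ℕ → Bool) (k : ℕ) : ℕ :=
  sInf {n | ∀ m, n ≤ m → k < Cplx U (opre A m)}

/-- Coding of binary strings by natural numbers, ordered by length first. -/
def strToNat (l : List Bool) : ℕ := l.foldl (fun a b => 2 * a + cond b 1 0) 1 - 1

/-- The least `U`-description of the string `x`, as a natural number. -/
noncomputable def leastDesc (U : List Bool →. List Bool) (x : List Bool) : ℕ :=
  sInf {m | ∃ p : List Bool, strToNat p = m ∧ x ∈ U p}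

/-- The set `A* = {(A↾g_A(k))* : k ∈ ℕ}` of least descriptions of the segments `A↾g_A(k)`. -/
noncomputable def Astar (U : List Bool →. List Bool) (A : ℕ → Bool) : ℕ → Bool :=
  fun m => decide (∃ k, m = leastDesc U (opre A (gA U A k)))

/-- A c.e. trace for `f` bounded by `h`: a uniformly c.e. sequence of finite sets
`T n` with `f n ∈ T n` and `|T n| ≤ h n`. -/
def CeTrace (h f : ℕ → ℕ) : Prop :=
  ∃ S : ℕ → ℕ → Prop, REPred (fun p : ℕ × ℕ => S p.1 p.2) ∧
    ∀ n, S n (f n) ∧ { y | S n y }.Finite ∧ Set.ncard { y | S n y } ≤ h n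

/-- The wtt-degree of `A` is r.e. traceable. -/
def ReTraceableWtt (A : ℕ → Bool) : Prop :=
  ∃ h, IsOrder h ∧ ∀ f : ℕ → ℕ, WttRed f A → CeTrace h f

/-- A computable trace for `f` bounded by `h` (finite sets given by canonical indices,
here: by computable lists). -/
def CompTrace (h f : ℕ → ℕ) : Prop :=
  ∃ T : ℕ → List ℕ, Computable T ∧ ∀ n, f n ∈ T n ∧ (T n).length ≤ h n

/-- Truth-table reducibility of a function to a set: a total computable functional
with computably bounded use. -/
def TtRed (f : ℕ → ℕ) (A : ℕ → Bool) : Prop :=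
  ∃ u : ℕ → ℕ, Computable u ∧ ∃ F : List Bool → ℕ → ℕ, Computable₂ F ∧
    ∀ n, F (opre A (u n)) n = f n

/-- `A` is Schnorr trivial (via the Franklin–Stephan characterisation:
its truth-table degree is computably traceable). -/
def SchnorrTrivial (A : ℕ → Bool) : Prop :=
  ∃ h, IsOrder h ∧ ∀ f : ℕ → ℕ, TtRed f A → CompTrace h f

/-- `A` is truth-table reducible to `B` with tiny use: for every order function `h`
there is a total computable functional computing `A` from `B` with use bounded by `h`. -/
def TttuRed (A B : ℕ → Bool) : Prop :=
  ∀ h, IsOrder h → ∃ F : List Bool → ℕ → Bool, Computable₂ F ∧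
    ∀ n, F (opre B (h n)) n = A n

/-- `g` dominates every computable function. -/
def Dominant (g : ℕ → ℕ) : Prop :=
  ∀ f : ℕ → ℕ, Computable f → ∀ᶠ n in atTop, f n ≤ g n

/-- Prefix of a function oracle. -/
def fpre (f : ℕ → ℕ) (n : ℕ) : List ℕ := (List.range n).map f

/-- Reduction of a set `A` to a function oracle `f` with use bounded by `u`. -/
def RedUseFn (A : ℕ → Bool) (f : ℕ → ℕ) (u : ℕ → ℕ) : Prop :=
  ∃ F : List ℕ → ℕ →. ℕ, Partrec₂ F ∧
    (∀ (σ τ : List ℕ) (n y : ℕ), σ <+: τ → y ∈ F σ n → y ∈ F τ n) ∧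
    ∀ n, natOf A n ∈ F (fpre f (u n)) n

/-- Uniform reducibility with tiny use to a function oracle. -/
def UTtuRedFn (A : ℕ → Bool) (f : ℕ → ℕ) : Prop :=
  ∃ u : ℕ → ℕ, (∀ h, IsOrder h → ∀ᶠ n in atTop, u n ≤ h n) ∧ RedUseFn A f u

/-- The graph of `f`, coded as a set via the standard pairing. -/
def graphOf (f : ℕ → ℕ) : ℕ → Bool :=
  fun m => decide (f (Nat.unpair m).1 = (Nat.unpair m).2)

/-- The real number with binary expansion `X`. -/
noncomputable def realOf (X : ℕ → Bool) : ℝ := ∑' n, cond (X n) (((2:ℝ) ^ (n + 1))⁻¹) 0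

/-- `X` is a left-c.e. real. -/
def LeftCE (X : ℕ → Bool) : Prop :=
  ∃ q : ℕ → ℚ, Computable q ∧ Monotone q ∧
    Tendsto (fun n => (q n : ℝ)) atTop (nhds (realOf X))

/-- `X` is Martin-Löf random: it passes every Martin-Löf test (given as a uniformly
c.e. sequence of sets of strings of measure at most `2^{-n}`). -/
def MLRandom (X : ℕ → Bool) : Prop :=
  ∀ W : ℕ → List Bool → Prop,
    REPred (fun p : ℕ × List Bool => W p.1 p.2) →
    (∀ n, ∑' σ : {σ : List Bool // W n σ}, ((2:ℝ) ^ (σ : List Bool).length)⁻¹ ≤ ((2:ℝ) ^ n)⁻¹) →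
    ∃ n, ∀ σ, W n σ → opre X σ.length ≠ σ

/-- `A` is a c.e. set. -/
def CeSet (A : ℕ → Bool) : Prop := REPred (fun n => A n = true)

/-! With use bounded by the order function `n ↦ n`, the self-reduction of `A` computes `A n`
from `A↾n` alone. Starting from the empty string and appending one output bit at a time thus
builds `A↾n` by a partial computable recursion that halts at every stage. -/

theorem opre_succ (B : ℕ → Bool) (n : ℕ) : opre B (n + 1) = opre B n ++ [B n] := by
  simp [opre, List.range_succ]

theorem opre_isPrefix (B : ℕ → Bool) {m n : ℕ} (h : m ≤ n) : opre B m <+: opre B n := by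
  obtain ⟨k, rfl⟩ := Nat.exists_eq_add_of_le h
  induction k with
  | zero => exact List.prefix_refl _
  | succ k ih =>
    rw [← Nat.add_assoc, opre_succ]
    exact (ih (Nat.le_add_right m k)).trans (List.prefix_append _ _)

theorem getD_opre_succ (B : ℕ → Bool) (n : ℕ) : (opre B (n + 1)).getD n false = B n := by
  simp [opre]

theorem decide_natOf_eq_one (A : ℕ → Bool) (n : ℕ) : decide (natOf A n = 1) = A n := by
  cases hA : A n <;> simp [natOf, hA]

def iterExtend (F : List Bool → ℕ →. ℕ) : ℕ →. List Bool := fun n =>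
  n.rec (Part.some []) fun k σs => σs.bind fun σ => (F σ k).map fun v => σ ++ [decide (v = 1)]

theorem iterExtend_partrec {F : List Bool → ℕ →. ℕ} (hF : Partrec₂ F) :
    Partrec (iterExtend F) := by
  refine Partrec.nat_rec Computable.id (Computable.const []).partrec
    (h := fun _ (p : ℕ × List Bool) => (F p.2 p.1).map fun v => p.2 ++ [decide (v = 1)]) ?_
  exact Partrec.to₂ <| Partrec.map
    (hF.comp (Computable.snd.comp Computable.snd) (Computable.fst.comp Computable.snd))
    (Primrec.list_append.comp ((Primrec.snd.comp Primrec.snd).comp Primrec.fst)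
      (Primrec.list_cons.comp (Primrec.eq.comp Primrec.snd (Primrec.const 1)).decide
        (Primrec.const []))).to_comp.to₂

theorem opre_mem_iterExtend {A : ℕ → Bool} {F : List Bool → ℕ →. ℕ}
    (hFA : ∀ n, natOf A n ∈ F (opre A n) n) (n : ℕ) : opre A n ∈ iterExtend F n := by
  induction n with
  | zero => exact Part.mem_some _
  | succ n ih =>
    refine Part.mem_bind_iff.2 ⟨_, ih, (Part.mem_map_iff _).2 ⟨_, hFA n, ?_⟩⟩
    rw [decide_natOf_eq_one, opre_succ]

theorem computable_of_sRedUse_self {A : ℕ → Bool} {u : ℕ → ℕ} (hu : ∀ n, u n ≤ n)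
    (hA : SRedUse A A u) : Computable A := by
  obtain ⟨F, hF, hmono, hFA⟩ := hA
  have hFA_self : ∀ n, natOf A n ∈ F (opre A n) n := fun n =>
    hmono _ _ _ _ (opre_isPrefix A (hu n)) (hFA n)
  have hread : Partrec fun n => (iterExtend F (n + 1)).map fun σ => σ.getD n false :=
    Partrec.map ((iterExtend_partrec hF).comp Computable.succ)
      ((Primrec.list_getD false).comp Primrec.snd Primrec.fst).to_comp.to₂
  refine hread.of_eq_tot fun n => (Part.mem_map_iff _).2 ⟨_, opre_mem_iterExtend hFA_self (n + 1), ?_⟩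
  exact getD_opre_succ A n

theorem isOrder_id : IsOrder id := ⟨Computable.id, monotone_id, fun m => ⟨m, le_rfl⟩⟩

theorem stmt3 (A : ℕ → Bool) (h : TtuRed A A) : Computable A :=
  computable_of_sRedUse_self (fun _ => le_rfl) (h id isOrder_id)
end

section
/- If A is anti-complex, then there is a constant c such that for every f ≤_{wtt} A, C(f(n)) ≤⁺ c·log₂(n). -/
open scoped Classical
open Filter

/-!
Let `u` be the computable use bound of the reduction and `v ≥ u` computable and strictly
increasing. Then `g k = v (2 ^ k)` is an order function, so anti-complexity gives
`C(A↾g(k)) ≤ k` for almost all `k`, while `A↾g(k)` already computes `f n` for all `n ≤ 2 ^ k`.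
Taking `k ≈ log n`, the value `f n` is computed from `n` and a shortest description `p` of
`A↾g(k)`; coding the pair as the binary expansion of `⟨n, p⟩` costs
`2 max(log n, |p|) + O(1)` bits, whence `c = 2`.
-/

def Nat.ofBitList (l : List Bool) : ℕ := l.foldr Nat.bit 0

theorem Nat.ofBitList_bits (n : ℕ) : ofBitList n.bits = n := by
  induction n using Nat.binaryRec' with
  | zero => simp [ofBitList]
  | bit b n hn ih => rw [bits_append_bit n b hn, ofBitList, List.foldr_cons, ← ofBitList, ih]

theorem Nat.bits_injective : Function.Injective Nat.bits :=
  Function.LeftInverse.injective ofBitList_bits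

theorem Nat.bits_ofBitList_append_true (l : List Bool) :
    (ofBitList (l ++ [true])).bits = l ++ [true] := by
  induction l with
  | nil => simp [ofBitList]
  | cons b l ih =>
    rw [List.cons_append, ofBitList, List.foldr_cons, ← ofBitList, bits_append_bit _ _ ?_, ih]
    intro h0
    simp [h0] at ih

theorem Nat.bits_eq_cons {n : ℕ} (hn : n ≠ 0) : n.bits = n.bodd :: n.div2.bits := by
  rw [bodd_eq_bits_head, div2_bits_eq_tail]
  refine (List.cons_head!_tail fun h => hn ?_).symm
  rw [← ofBitList_bits n, h, ofBitList, List.foldr_nil]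

theorem Primrec.nat_bit : Primrec₂ Nat.bit :=
  (Primrec.cond Primrec.fst (Primrec.succ.comp (Primrec.nat_mul.comp (Primrec.const 2) Primrec.snd))
    (Primrec.nat_mul.comp (Primrec.const 2) Primrec.snd)).of_eq fun p => by
      cases p.1 <;> simp [Nat.bit]

theorem Primrec.nat_ofBitList : Primrec Nat.ofBitList :=
  (Primrec.list_foldr Primrec.id (Primrec.const 0)
    (Primrec.nat_bit.comp (Primrec.fst.comp Primrec.snd) (Primrec.snd.comp Primrec.snd)).to₂).of_eq
    fun _ => rfl

theorem Primrec.nat_bits : Primrec Nat.bits := by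
  refine Primrec.nat_omega_rec' Nat.bits (m := id) (l := fun n => if n = 0 then [] else [n.div2])
    (g := fun n l => some (l.flatMap (n.bodd :: ·))) Primrec.id ?_ ?_ ?_ ?_
  · exact Primrec.ite (Primrec.eq.comp Primrec.id (Primrec.const 0)) (Primrec.const [])
      (Primrec.list_cons.comp Primrec.nat_div2 (Primrec.const []))
  · exact Primrec.option_some.comp₂ (Primrec.list_flatMap Primrec.snd
      (Primrec.list_cons.comp₂ (Primrec.nat_bodd.comp₂ (Primrec.fst.comp₂ Primrec₂.left)) Primrec₂.right))
  · intro n m hm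
    split_ifs at hm with h
    · simp at hm
    · simp only [List.mem_singleton] at hm; subst hm; simp only [id, Nat.div2_val]; omega
  · intro n
    split_ifs with h
    · simp [h]
    · simp [Nat.bits_eq_cons h]

theorem Computable.exists_partrec_leftInverse {α β : Type*} [Primcodable α] [Primcodable β]
    {e : α → β} (he : Computable e) (hinj : Function.Injective e) :
    ∃ d : β →. α, Partrec d ∧ ∀ a, a ∈ d (e a) := by
  let test : β → ℕ → Bool := fun b k => decide ((Encodable.decode k : Option α).map e = some b)
  have htest : Computable₂ test :=
    (Primrec.eq.decide.to_comp.comp (Computable.option_map (Computable.decode.comp Computable.snd)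
      (he.comp Computable.snd).to₂) (Computable.option_some.comp Computable.fst)).to₂
  refine ⟨fun b => (Nat.rfind fun k => test b k).bind fun k => (Encodable.decode k : Option α),
    (Partrec.rfind htest.partrec₂).bind (Computable.ofOption (Computable.decode.comp Computable.snd)),
    fun a => ?_⟩
  obtain ⟨k, hk, -⟩ := Nat.rfind_min' (p := test (e a)) (m := Encodable.encode a)
    (by simp [test, Encodable.encodek])
  have hk' : test (e a) k = true := by simpa using Nat.rfind_spec hk
  obtain ⟨a', ha', hea'⟩ := Option.map_eq_some_iff.mp (of_decide_eq_true hk')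
  exact Part.mem_bind_iff.mpr ⟨k, hk, by rw [ha', hinj hea']; exact Part.mem_some a⟩

-- The appended `true` becomes the leading bit, so `Nat.bits` returns `p ++ [true]` intact.
def pairCode (x : ℕ × List Bool) : List Bool := (Nat.pair x.1 (Nat.ofBitList (x.2 ++ [true]))).bits

theorem pairCode_injective : Function.Injective pairCode := by
  intro x y h
  obtain ⟨h₁, h₂⟩ := Nat.pair_eq_pair.mp (Nat.bits_injective h)
  refine Prod.ext h₁ ?_
  have h₂' := congrArg Nat.bits h₂
  rwa [Nat.bits_ofBitList_append_true, Nat.bits_ofBitList_append_true,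
    List.append_cancel_right_eq] at h₂'

theorem Primrec.pairCode : Primrec pairCode :=
  Primrec.nat_bits.comp (Primrec₂.natPair.comp Primrec.fst
    (Primrec.nat_ofBitList.comp (Primrec.list_concat.comp Primrec.snd (Primrec.const true))))

theorem length_pairCode_le (n : ℕ) (p : List Bool) :
    (pairCode (n, p)).length ≤ 2 * (max (Nat.log 2 n) p.length + 1) := by
  set j := max (Nat.log 2 n) p.length + 1
  set m := Nat.ofBitList (p ++ [true])
  have hn : n < 2 ^ j := (Nat.lt_pow_succ_log_self one_lt_two n).trans_le
    (Nat.pow_le_pow_right two_pos (by omega))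
  have hm : m < 2 ^ j := by
    refine Nat.size_le.mp ?_
    rw [← Nat.size_eq_bits_len, Nat.bits_ofBitList_append_true, List.length_append]
    simp only [List.length_singleton]; omega
  rw [pairCode, Nat.size_eq_bits_len, Nat.size_le]
  calc Nat.pair n m < (max n m + 1) ^ 2 := Nat.pair_lt_max_add_one_sq n m
    _ ≤ (2 ^ j) ^ 2 := Nat.pow_le_pow_left (by omega) 2
    _ = 2 ^ (2 * j) := by rw [← pow_mul, mul_comm]

theorem cplx_le_length_of_mem {U : List Bool →. List Bool} {x p : List Bool} (hp : x ∈ U p) :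
    Cplx U x ≤ p.length :=
  Nat.sInf_le ⟨p, rfl, hp⟩

namespace Optimal

variable {U : List Bool →. List Bool}

theorem exists_length_eq_cplx (hU : Optimal U) (x : List Bool) :
    ∃ p : List Bool, p.length = Cplx U x ∧ x ∈ U p := by
  obtain ⟨c, hc⟩ := hU.2 (fun p => Part.some p) Partrec.some
  obtain ⟨p, -, hp⟩ := hc x x (Part.mem_some x)
  exact Nat.sInf_mem (s := {k | ∃ p : List Bool, p.length = k ∧ x ∈ U p}) ⟨p.length, p, rfl, hp⟩

theorem exists_cplx_le_length_add {α : Type*} [Primcodable α] (hU : Optimal U)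
    {M : α →. List Bool} (hM : Partrec M) {e : α → List Bool} (he : Computable e)
    (hinj : Function.Injective e) : ∃ c, ∀ a, ∀ x ∈ M a, Cplx U x ≤ (e a).length + c := by
  obtain ⟨d, hd, hde⟩ := he.exists_partrec_leftInverse hinj
  obtain ⟨c, hc⟩ := hU.2 (fun q => (d q).bind M) (hd.bind (hM.comp Computable.snd))
  refine ⟨c, fun a x hx => ?_⟩
  obtain ⟨q, hq, hxq⟩ := hc (e a) x (Part.mem_bind_iff.mpr ⟨a, hde a, hx⟩)
  exact (cplx_le_length_of_mem hxq).trans hq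

theorem exists_cplxN_le_of_partrec (hU : Optimal U) {F : List Bool → ℕ →. ℕ} (hF : Partrec₂ F) :
    ∃ c, ∀ σ n, ∀ y ∈ F σ n, CplxN U y ≤ 2 * max (Nat.log 2 n) (Cplx U σ) + c := by
  let M : ℕ × List Bool →. List Bool := fun x => (U x.2).bind fun σ => (F σ x.1).map Nat.bits
  have hM : Partrec M := (hU.1.comp Computable.snd).bind
    ((hF.comp Computable.snd (Computable.fst.comp Computable.fst)).map
      (Primrec.nat_bits.to_comp.comp Computable.snd).to₂)
  obtain ⟨c, hc⟩ := hU.exists_cplx_le_length_add hM Primrec.pairCode.to_comp pairCode_injective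
  refine ⟨c + 2, fun σ n y hy => ?_⟩
  obtain ⟨p, hp, hpσ⟩ := hU.exists_length_eq_cplx σ
  have hyM : y.bits ∈ M (n, p) := Part.mem_bind_iff.mpr ⟨σ, hpσ, Part.mem_map _ hy⟩
  calc CplxN U y ≤ (pairCode (n, p)).length + c := hc _ _ hyM
    _ ≤ 2 * (max (Nat.log 2 n) p.length + 1) + c := by gcongr; exact length_pairCode_le n p
    _ = 2 * max (Nat.log 2 n) (Cplx U σ) + (c + 2) := by rw [hp]; ring

end Optimal

theorem Primrec.nat_pow : Primrec₂ ((· ^ ·) : ℕ → ℕ → ℕ) :=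
  Primrec₂.unpaired'.1 Nat.Primrec.pow

theorem Computable.exists_strictMono_le {u : ℕ → ℕ} (hu : Computable u) :
    ∃ v : ℕ → ℕ, Computable v ∧ StrictMono v ∧ ∀ n, u n ≤ v n := by
  let v : ℕ → ℕ := fun n => Nat.rec (u 0) (fun k vk => max vk (u (k + 1)) + 1) n
  have hstep : Computable₂ fun (_ : ℕ) (p : ℕ × ℕ) => max p.2 (u (p.1 + 1)) + 1 :=
    (Computable.succ.comp (Primrec.nat_max.to_comp.comp (Computable.snd.comp Computable.snd)
      (hu.comp (Computable.succ.comp (Computable.fst.comp Computable.snd))))).to₂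
  refine ⟨v, (Computable.nat_rec Computable.id (Computable.const (u 0)) hstep).of_eq fun _ => rfl,
    strictMono_nat_of_lt_succ fun n => by simp only [v]; omega, fun n => ?_⟩
  cases n with
  | zero => exact le_rfl
  | succ n => simp only [v]; omega

theorem opre_prefix_opre (A : ℕ → Bool) {a b : ℕ} (hab : a ≤ b) : opre A a <+: opre A b := by
  have h := List.take_prefix a (List.range b)
  rw [List.take_range, min_eq_left hab] at h
  exact h.map A

theorem AntiComplex.exists_cplx_le_of_redUse {U : List Bool →. List Bool} {A : ℕ → Bool}
    (h : AntiComplex U A) {f u : ℕ → ℕ} {F : List Bool → ℕ →. ℕ} (hu : Computable u)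
    (hmono : ∀ (σ τ : List Bool) (n y : ℕ), σ <+: τ → y ∈ F σ n → y ∈ F τ n)
    (hfn : ∀ n, f n ∈ F (opre A (u n)) n) :
    ∃ K, ∀ n, ∃ σ, Cplx U σ ≤ max (Nat.log 2 n + 1) K ∧ f n ∈ F σ n := by
  obtain ⟨v, hv, hvmono, huv⟩ := hu.exists_strictMono_le
  let g : ℕ → ℕ := fun k => v (2 ^ k)
  have hg : IsOrder g := ⟨hv.comp ((Primrec.nat_pow.comp (Primrec.const 2) Primrec.id).to_comp),
    fun _ _ hab => hvmono.monotone (Nat.pow_le_pow_right two_pos hab),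
    fun m => ⟨m, Nat.lt_two_pow_self.le.trans (hvmono.id_le _)⟩⟩
  obtain ⟨K, hK⟩ := Filter.eventually_atTop.mp (h g hg)
  refine ⟨K, fun n => ⟨opre A (g (max (Nat.log 2 n + 1) K)), hK _ (le_max_right _ _), ?_⟩⟩
  have hn : n ≤ 2 ^ max (Nat.log 2 n + 1) K := (Nat.lt_pow_succ_log_self one_lt_two n).le.trans
    (Nat.pow_le_pow_right two_pos (le_max_left _ _))
  exact hmono _ _ _ _ (opre_prefix_opre A ((huv n).trans (hvmono.monotone hn))) (hfn n)

theorem stmt12 (U : List Bool →. List Bool) (hU : Optimal U) (A : ℕ → Bool)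
    (h : AntiComplex U A) :
    ∃ c, ∀ f : ℕ → ℕ, WttRed f A → ∃ d, ∀ n, CplxN U (f n) ≤ c * Nat.log 2 n + d := by
  refine ⟨2, fun f ⟨u, hu, F, hF, hmono, hfn⟩ => ?_⟩
  obtain ⟨K, hK⟩ := h.exists_cplx_le_of_redUse hu hmono hfn
  obtain ⟨c, hc⟩ := hU.exists_cplxN_le_of_partrec hF
  refine ⟨2 * K + c + 2, fun n => ?_⟩
  obtain ⟨σ, hσ, hfσ⟩ := hK n
  calc CplxN U (f n) ≤ 2 * max (Nat.log 2 n) (Cplx U σ) + c := hc σ n (f n) hfσ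
    _ ≤ 2 * Nat.log 2 n + (2 * K + c + 2) := by omega
end

section
/- Every Schnorr trivial set is anti-complex. -/
open scoped Classical
open Filter

/-!
Split `ℕ` into blocks `[s k, s (k+1))` with `s k > b k`, where `b` bounds the computable traces
witnessing Schnorr triviality. The function `k ↦ A↾f(s (k+1))` is tt-reducible to `A`, so it has
a computable trace `T` with `|T k| ≤ b k`. For `n` in block `k`, the string `A↾f(n)` is therefore
a prefix of the `j`-th entry of `T k` for some `j < n`, so it is computed from the triple
`(n, k, j)`, which takes `O(log n)` bits to describe; eventually this is at most `n`.
-/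

open Encodable

lemma eventually_pow_mul_lt_two_pow (d c : ℕ) : ∀ᶠ n : ℕ in atTop, (n + 1) ^ d * 2 ^ c < 2 ^ n := by
  have hlim := (tendsto_pow_const_div_const_pow_of_one_lt d one_lt_two).comp
    (tendsto_add_atTop_nat 1)
  filter_upwards [hlim.eventually (gt_mem_nhds (by positivity : (0 : ℝ) < (2 ^ (c + 1))⁻¹))]
    with n hn
  simp only [Function.comp_apply, Nat.cast_add, Nat.cast_one] at hn
  rw [div_lt_iff₀ (by positivity), ← div_eq_inv_mul, lt_div_iff₀ (by positivity)] at hn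
  have hnat : (n + 1) ^ d * 2 ^ (c + 1) < 2 ^ (n + 1) := by exact_mod_cast hn
  rw [pow_succ, pow_succ, ← mul_assoc] at hnat
  omega

lemma StrictMono.exists_le_and_lt_succ {s : ℕ → ℕ} (hs : StrictMono s) {n : ℕ} (hn : s 0 ≤ n) :
    ∃ k, s k ≤ n ∧ n < s (k + 1) := by
  set K := Nat.findGreatest (fun k => s k ≤ n) n
  refine ⟨K, Nat.findGreatest_spec (P := fun k => s k ≤ n) (Nat.zero_le n) hn, ?_⟩
  by_contra! hle
  exact Nat.findGreatest_is_greatest (Nat.lt_succ_self K) (hs.le_apply.trans hle) hle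

lemma opre_eq_take {A : ℕ → Bool} {l m : ℕ} (h : l ≤ m) : opre A l = (opre A m).take l := by
  rw [opre, opre, ← List.map_take, List.take_range, min_eq_left h]

section StrToNat

lemma le_foldl_strToNat_step (l : List Bool) {a : ℕ} :
    a ≤ l.foldl (fun a b => 2 * a + cond b 1 0) a := by
  induction l generalizing a with
  | nil => rfl
  | cons b l ih => exact le_trans (by show a ≤ 2 * a + cond b 1 0; omega) ih

lemma strToNat_append_singleton (l : List Bool) (b : Bool) :
    strToNat (l ++ [b]) = 2 * strToNat l + 1 + cond b 1 0 := by
  have := le_foldl_strToNat_step l (a := 1)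
  simp only [strToNat, List.foldl_append, List.foldl_cons, List.foldl_nil]
  omega

lemma primrec_strToNat : Primrec strToNat := by
  have hstep : Primrec₂ fun (_ : List Bool) (x : ℕ × Bool) => 2 * x.1 + cond x.2 1 0 :=
    (Primrec.nat_add.comp (Primrec.nat_mul.comp (Primrec.const 2) (Primrec.fst.comp Primrec.snd))
      (Primrec.cond (Primrec.snd.comp Primrec.snd) (Primrec.const 1) (Primrec.const 0))).to₂
  exact Primrec.nat_sub.comp (Primrec.list_foldl Primrec.id (Primrec.const 1) hstep)
    (Primrec.const 1)

lemma exists_strToNat_eq (v : ℕ) :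
    ∃ p : List Bool, strToNat p = v ∧ p.length = Nat.log 2 (v + 1) := by
  induction v using Nat.strong_induction_on with
  | _ v ih =>
    rcases Nat.eq_zero_or_pos v with rfl | hv
    · exact ⟨[], rfl, by simp⟩
    obtain ⟨p, hp, hlen⟩ := ih ((v - 1) / 2) (by omega)
    refine ⟨p ++ [decide ((v - 1) % 2 = 1)], ?_, ?_⟩
    · rw [strToNat_append_singleton, hp]
      rcases Nat.mod_two_eq_zero_or_one (v - 1) with h | h <;> simp [h] <;> omega
    · rw [Nat.log_of_one_lt_of_le one_lt_two (by omega), List.length_append, hlen,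
        List.length_singleton, show (v + 1) / 2 = (v - 1) / 2 + 1 by omega]

end StrToNat

section Complexity

variable {U : List Bool →. List Bool}

lemma cplx_le_length {p x : List Bool} (h : x ∈ U p) : Cplx U x ≤ p.length :=
  Nat.sInf_le ⟨p, rfl, h⟩

lemma Optimal.exists_cplx_le_length_add_s16 (hU : Optimal U) {M : List Bool → List Bool}
    (hM : Computable M) : ∃ c, ∀ p, Cplx U (M p) ≤ p.length + c := by
  obtain ⟨c, hc⟩ := hU.2 (fun p => Part.some (M p)) hM.partrec
  refine ⟨c, fun p => ?_⟩
  obtain ⟨q, hq, hqU⟩ := hc p (M p) (Part.mem_some _)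
  exact (cplx_le_length hqU).trans hq

lemma Optimal.eventually_cplx_le (hU : Optimal U) {g : ℕ × ℕ × ℕ → List Bool}
    (hg : Computable g) : ∀ᶠ n in atTop, ∀ k ≤ n, ∀ j ≤ n, Cplx U (g (n, k, j)) ≤ n := by
  let unpair₃ : ℕ → ℕ × ℕ × ℕ := fun v => (v.unpair.1, v.unpair.2.unpair.1, v.unpair.2.unpair.2)
  have hunpair₃ : Computable unpair₃ :=
    Computable.pair (Computable.fst.comp Computable.unpair)
      (Computable.unpair.comp (Computable.snd.comp Computable.unpair))
  obtain ⟨c, hc⟩ := hU.exists_cplx_le_length_add_s16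
    (hg.comp (hunpair₃.comp primrec_strToNat.to_comp))
  filter_upwards [eventually_pow_mul_lt_two_pow 4 c] with n hn k hk j hj
  obtain ⟨p, hp, hlen⟩ := exists_strToNat_eq (Nat.pair n (Nat.pair k j))
  have hkj : Nat.pair k j + 1 ≤ (n + 1) ^ 2 :=
    (Nat.pair_lt_max_add_one_sq k j).trans_le (Nat.pow_le_pow_left (by omega) 2)
  have hcode : Nat.pair n (Nat.pair k j) + 1 ≤ (n + 1) ^ 4 := by
    have hsq : n + 1 ≤ (n + 1) ^ 2 := Nat.le_self_pow two_ne_zero _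
    calc Nat.pair n (Nat.pair k j) + 1 ≤ (max n (Nat.pair k j) + 1) ^ 2 :=
          Nat.pair_lt_max_add_one_sq _ _
      _ ≤ ((n + 1) ^ 2) ^ 2 := Nat.pow_le_pow_left (by omega) 2
      _ = (n + 1) ^ 4 := by ring
  have hpow : 2 ^ (p.length + c) < 2 ^ n :=
    calc 2 ^ (p.length + c) ≤ (Nat.pair n (Nat.pair k j) + 1) * 2 ^ c := by
          rw [pow_add, hlen]
          exact Nat.mul_le_mul_right _ (Nat.pow_log_le_self 2 (Nat.succ_ne_zero _))
      _ ≤ (n + 1) ^ 4 * 2 ^ c := Nat.mul_le_mul_right _ hcode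
      _ < 2 ^ n := hn
  have := hc p
  simp only [hp, unpair₃, Nat.unpair_pair] at this
  exact this.trans (Nat.pow_lt_pow_iff_right one_lt_two |>.mp hpow).le

end Complexity

lemma ttRed_encode_opre (A : ℕ → Bool) {u : ℕ → ℕ} (hu : Computable u) :
    TtRed (fun k => encode (opre A (u k))) A :=
  ⟨u, hu, fun σ _ => encode σ, (Computable.encode.comp Computable.fst).to₂, fun _ => rfl⟩

theorem stmt16 (U : List Bool →. List Bool) (hU : Optimal U) (A : ℕ → Bool)
    (h : SchnorrTrivial A) : AntiComplex U A := by
  rintro f ⟨hf, hf_mono, -⟩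
  obtain ⟨b, ⟨hb, hb_mono, -⟩, htrace⟩ := h
  let s : ℕ → ℕ := fun k => b k + k + 1
  have hs : StrictMono s := fun k l hkl => by
    have := hb_mono hkl.le
    simp only [s]
    omega
  have hsc : Computable s := Primrec.succ.to_comp.comp (Primrec.nat_add.to_comp.comp hb .id)
  obtain ⟨T, hT, hTspec⟩ :=
    htrace _ (ttRed_encode_opre A (hf.comp (hsc.comp Computable.succ)))
  let g : ℕ × ℕ × ℕ → List Bool := fun x =>
    ((decode ((T x.2.1).getD x.2.2 0) : Option (List Bool)).getD []).take (f x.1)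
  have hg : Computable g :=
    Primrec.list_take.to_comp.comp (hf.comp .fst) <| Primrec.option_getD.to_comp.comp
      (Primrec.decode.to_comp.comp <| (Primrec.list_getD 0).to_comp.comp
        (hT.comp (Computable.fst.comp .snd)) (Computable.snd.comp .snd))
      (Computable.const [])
  filter_upwards [hU.eventually_cplx_le hg, eventually_ge_atTop (s 0)] with n hn hn₀
  obtain ⟨k, hkn, hnk⟩ := hs.exists_le_and_lt_succ hn₀
  obtain ⟨hmem, hlen⟩ := hTspec k
  obtain ⟨j, hj, hjT⟩ := List.mem_iff_getElem.mp hmem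
  have hgA : g (n, k, j) = opre A (f n) := by
    simp only [g, List.getD_eq_getElem _ _ hj, hjT, encodek, Option.getD_some]
    exact (opre_eq_take (hf_mono hnk.le)).symm
  rw [← hgA]
  exact hn k (hs.le_apply.trans hkn) j (by simp only [s] at hkn; omega)
end

section
/- A set A is Schnorr trivial if and only if there exists a set B such that A ≤_{tt(tu)} B. -/
open scoped Classical
open Filter

/-!
(⇐) Given `f ≤_tt A` with use `u`, choose an order `g` with `g k ≤ n` whenever `k < u n`.
Running a reduction of `A` to `B` with use `g` on each of the `2 ^ n` strings of length `n`
yields `2 ^ n` candidates for `A↾u(n)`, hence for `f n`, one of which is right: a computable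
trace of size `2 ^ n`.

(⇒) A computable trace bound can be lowered to any order `g ≥ 1` by tracing long prefixes of
`f` at once. Enumerate all orders `H i`. For each `i` choose a computable strictly increasing `t`
and trace `m ↦ A↾m` with a bound that equals `n + 2` at `t n`; block `n` of column `i` of `B`
records, in `n + 2` bits, which entry of the trace at `t n` is `A↾t(n)`. As `t` grows so fast
that block `n` lies below `H i (t (n - 1))`, the bits `A k` with `t (n - 1) ≤ k < t n` are read
off `B↾H i k` by one total procedure, the finitely many `k < t 0` being hard-wired.
-/

section Computability

variable {α β σ : Type*} [Primcodable α] [Primcodable β] [Primcodable σ]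

theorem Computable.nat_find {p : α → ℕ → Bool} (hp : Computable₂ p)
    (hex : ∀ a, ∃ n, p a n = true) : Computable fun a => Nat.find (hex a) := by
  refine (Partrec.rfind (p := fun a n => (p a n : Part Bool)) hp.partrec₂).of_eq_tot fun a => ?_
  refine Nat.mem_rfind.2 ⟨by simpa using Nat.find_spec (hex a), fun hm => ?_⟩
  simpa using Nat.find_min (hex a) hm

theorem Computable.list_map_range {n : α → ℕ} {g : α → ℕ → σ} (hn : Computable n)
    (hg : Computable₂ g) : Computable fun a => (List.range (n a)).map (g a) := by
  refine (Computable.nat_rec (g := fun _ => ([] : List σ)) hn (Computable.const [])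
    (Computable.list_concat.comp (Computable.snd.comp Computable.snd)
      (hg.comp Computable.fst (Computable.fst.comp Computable.snd))).to₂).of_eq fun a => ?_
  induction n a with
  | zero => rfl
  | succ k ih => simp [List.range_succ, ih]

theorem Computable.list_map [Inhabited β] {f : α → List β} {g : α → β → σ}
    (hf : Computable f) (hg : Computable₂ g) : Computable fun a => (f a).map (g a) := by
  refine (Computable.list_map_range (Computable.list_length.comp hf)
    (hg.comp Computable.fst ((Primrec.list_getD default).to_comp.comp
      (hf.comp Computable.fst) Computable.snd)).to₂).of_eq fun a => ?_
  refine List.ext_getElem (by simp) fun k h₁ h₂ => ?_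
  simp [List.getD_eq_getElem?_getD, List.getElem?_eq_getElem (by simpa using h₁)]

theorem Computable.ite_lt [Inhabited β] {f : α → β} {key : α → ℕ} (hf : Computable f)
    (hkey : Computable key) (N : ℕ) (a : ℕ → β) :
    Computable fun x => if key x < N then a (key x) else f x := by
  have htable := (Primrec.list_getD default).to_comp.comp
    (Computable.const ((List.range N).map a)) hkey
  refine (Computable.cond (Primrec.nat_lt.decide.to_comp.comp hkey (Computable.const N))
    htable hf).of_eq fun x => ?_
  by_cases hx : key x < N
  · simp [hx, List.getD_eq_getElem?_getD]
  · simp [hx]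

end Computability

theorem getD_opre {B : ℕ → Bool} {k n : ℕ} (h : k < n) (b : Bool) :
    (opre B n).getD k b = B k := by
  simp [opre, List.getD_eq_getElem?_getD, List.getElem?_range h]

theorem take_opre (B : ℕ → Bool) {m n : ℕ} (h : m ≤ n) : (opre B n).take m = opre B m := by
  simp [opre, ← List.map_take, List.take_range, min_eq_left h]

def majorant (u : ℕ → ℕ) : ℕ → ℕ
  | 0 => u 0
  | n + 1 => majorant u n + u (n + 1) + 1

theorem strictMono_majorant (u : ℕ → ℕ) : StrictMono (majorant u) :=
  strictMono_nat_of_lt_succ fun n => by simp only [majorant]; omega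

theorem le_majorant (u : ℕ → ℕ) : ∀ n, u n ≤ majorant u n
  | 0 => le_rfl
  | n + 1 => by simp only [majorant]; omega

theorem Computable.majorant {u : ℕ → ℕ} (hu : Computable u) : Computable (majorant u) := by
  refine (Computable.nat_rec (f := id) (g := fun _ => u 0) Computable.id (Computable.const _)
    (Primrec.nat_add.to_comp.comp (Primrec.nat_add.to_comp.comp
      (Computable.snd.comp Computable.snd)
      (hu.comp (Computable.succ.comp (Computable.fst.comp Computable.snd))))
      (Computable.const 1)).to₂).of_eq fun n => ?_
  induction n with
  | zero => rfl
  | succ n ih => simp only [id] at ih ⊢; rw [_root_.majorant, ← ih]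

noncomputable def firstAbove (t : ℕ → ℕ) (k : ℕ) : ℕ := sInf {n | k < t n}

section FirstAbove

variable {t : ℕ → ℕ}

theorem exists_lt_of_strictMono (ht : StrictMono t) (k : ℕ) : ∃ n, k < t n :=
  ⟨k + 1, Nat.lt_of_lt_of_le (Nat.lt_succ_self k) (ht.id_le _)⟩

theorem lt_apply_firstAbove (ht : StrictMono t) (k : ℕ) : k < t (firstAbove t k) :=
  Nat.sInf_mem (exists_lt_of_strictMono ht k)

theorem firstAbove_le_iff (ht : StrictMono t) {k n : ℕ} : firstAbove t k ≤ n ↔ k < t n :=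
  ⟨fun h => (lt_apply_firstAbove ht k).trans_le (ht.monotone h), fun h => Nat.sInf_le h⟩

theorem lt_firstAbove_iff (ht : StrictMono t) {k n : ℕ} : n < firstAbove t k ↔ t n ≤ k := by
  simpa using (firstAbove_le_iff ht).not

theorem firstAbove_apply (ht : StrictMono t) (n : ℕ) : firstAbove t (t n) = n + 1 :=
  le_antisymm ((firstAbove_le_iff ht).2 (ht n.lt_succ_self))
    ((lt_firstAbove_iff ht).2 le_rfl)

theorem monotone_firstAbove (ht : StrictMono t) : Monotone (firstAbove t) := fun _ _ hkl =>
  (firstAbove_le_iff ht).2 (hkl.trans_lt (lt_apply_firstAbove ht _))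

theorem Computable.firstAbove (ht : StrictMono t) (htc : Computable t) :
    Computable (firstAbove t) := by
  have hex : ∀ k, ∃ n, decide (k < t n) = true := fun k => by
    simpa using exists_lt_of_strictMono ht k
  refine (Computable.nat_find (Primrec.nat_lt.decide.to_comp.comp Computable.fst
    (htc.comp Computable.snd)).to₂ hex).of_eq fun k =>
    le_antisymm (Nat.find_min' _ (by simpa using lt_apply_firstAbove ht k))
      ((firstAbove_le_iff ht).2 (by simpa using Nat.find_spec (hex k)))

theorem isOrder_firstAbove (ht : StrictMono t) (htc : Computable t) : IsOrder (firstAbove t) :=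
  ⟨Computable.firstAbove ht htc, monotone_firstAbove ht,
    fun m => ⟨t m, (firstAbove_apply ht m).symm ▸ m.le_succ⟩⟩

end FirstAbove

theorem IsOrder.exists_strictMono_le_comp {g : ℕ → ℕ} (hg : IsOrder g) {b : ℕ → ℕ}
    (hb : Computable b) : ∃ t, Computable t ∧ StrictMono t ∧ ∀ n, b n ≤ g (t n) := by
  have hex : ∀ n, ∃ x, decide (b n ≤ g x) = true := fun n => by simpa using hg.2.2 (b n)
  have hfind : Computable fun n => Nat.find (hex n) := Computable.nat_find
    (Primrec.nat_le.decide.to_comp.comp (hb.comp Computable.fst)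
      (hg.1.comp Computable.snd)).to₂ hex
  exact ⟨majorant fun n => Nat.find (hex n), hfind.majorant, strictMono_majorant _,
    fun n => (of_decide_eq_true (Nat.find_spec (hex n))).trans
      (hg.2.1 (le_majorant (fun n => Nat.find (hex n)) n))⟩

theorem isOrder_two_pow : IsOrder (2 ^ ·) :=
  ⟨(Primrec₂.unpaired'.1 Nat.Primrec.pow).to_comp.comp (Computable.const 2) Computable.id,
    fun _ _ h => Nat.pow_le_pow_right two_pos h, fun m => ⟨m, Nat.lt_two_pow_self.le⟩⟩

theorem exists_isOrder_le_of_lt {u : ℕ → ℕ} (hu : Computable u) :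
    ∃ g, IsOrder g ∧ ∀ n k, k < u n → g k ≤ n :=
  ⟨firstAbove (majorant u), isOrder_firstAbove (strictMono_majorant u) hu.majorant,
    fun n _ hk => (firstAbove_le_iff (strictMono_majorant u)).2
      (hk.trans_le (le_majorant u n))⟩

def allStrings : ℕ → List (List Bool)
  | 0 => [[]]
  | n + 1 => (allStrings n).flatMap fun σ => [σ ++ [false], σ ++ [true]]

theorem length_allStrings : ∀ n, (allStrings n).length = 2 ^ n
  | 0 => rfl
  | n + 1 => by simp [allStrings, List.length_flatMap, length_allStrings n, pow_succ]

theorem opre_mem_allStrings (B : ℕ → Bool) : ∀ n, opre B n ∈ allStrings n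
  | 0 => List.mem_singleton_self _
  | n + 1 => List.mem_flatMap.2 ⟨opre B n, opre_mem_allStrings B n, by
      cases B n <;> simp [opre_succ]⟩

theorem Primrec.allStrings : Primrec allStrings := by
  have hstep : Primrec₂ fun (_ : ℕ) (L : List (List Bool)) =>
      L.flatMap fun σ => [σ ++ [false], σ ++ [true]] :=
    (Primrec.list_flatMap Primrec.snd
      (Primrec.list_cons.comp (Primrec.list_concat.comp Primrec.snd (Primrec.const false))
        (Primrec.list_cons.comp (Primrec.list_concat.comp Primrec.snd (Primrec.const true))
          (Primrec.const []))).to₂)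
  refine (Primrec.nat_rec₁ [[]] hstep).of_eq fun n => ?_
  induction n with
  | zero => rfl
  | succ n ih => simp only at ih ⊢; rw [ih]; rfl

theorem TttuRed.schnorrTrivial {A B : ℕ → Bool} (hAB : TttuRed A B) : SchnorrTrivial A := by
  refine ⟨(2 ^ ·), isOrder_two_pow, ?_⟩
  rintro f ⟨u, hu, F, hF, hFA⟩
  obtain ⟨g, hg, hgu⟩ := exists_isOrder_le_of_lt hu
  obtain ⟨G, hG, hGB⟩ := hAB g hg
  let guess : ℕ → List Bool → ℕ := fun n σ =>
    F ((List.range (u n)).map fun k => G (σ.take (g k)) k) n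
  have hguess : Computable₂ guess :=
    (hF.comp (Computable.list_map_range (hu.comp Computable.fst)
      (hG.comp (Primrec.list_take.to_comp.comp (hg.1.comp Computable.snd)
        (Computable.snd.comp Computable.fst)) Computable.snd).to₂) Computable.fst).to₂
  refine ⟨fun n => (allStrings n).map (guess n),
    Computable.list_map Primrec.allStrings.to_comp hguess,
    fun n => ⟨?_, by simp [length_allStrings]⟩⟩
  refine List.mem_map.2 ⟨opre B n, opre_mem_allStrings B n, ?_⟩
  have hpre : (List.range (u n)).map (fun k => G ((opre B n).take (g k)) k) = opre A (u n) :=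
    List.map_congr_left fun k hk => by rw [take_opre B (hgu n k (List.mem_range.1 hk)), hGB]
  simp only [guess, hpre, hFA]

theorem ttRed_encode_opre_s17 (A : ℕ → Bool) : TtRed (fun m => Encodable.encode (opre A m)) A :=
  ⟨id, Computable.id, fun σ _ => Encodable.encode σ,
    (Computable.encode.comp Computable.fst).to₂, fun _ => rfl⟩

theorem TtRed.encode_prefix {f : ℕ → ℕ} {A : ℕ → Bool} (hf : TtRed f A) {L : ℕ → ℕ}
    (hL : Computable L) : TtRed (fun j => Encodable.encode ((List.range (L j)).map f)) A := by
  obtain ⟨u, hu, F, hF, hFA⟩ := hf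
  refine ⟨fun j => majorant u (L j), hu.majorant.comp hL,
    fun σ j => Encodable.encode ((List.range (L j)).map fun k => F (σ.take (u k)) k), ?_,
    fun j => congrArg Encodable.encode (List.map_congr_left fun k hk => ?_)⟩
  · exact (Computable.encode.comp (Computable.list_map_range (hL.comp Computable.snd)
      (hF.comp (Primrec.list_take.to_comp.comp (hu.comp Computable.snd)
        (Computable.fst.comp Computable.fst)) Computable.snd).to₂)).to₂
  · have hk : u k ≤ majorant u (L j) :=
      (le_majorant u k).trans ((strictMono_majorant u).monotone (List.mem_range.1 hk).le)
    rw [take_opre A hk, hFA]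

theorem CompTrace.of_forall_ge {g f : ℕ → ℕ} (hg : ∀ m, 1 ≤ g m) {T : ℕ → List ℕ}
    (hT : Computable T) (N : ℕ) (hTf : ∀ m, N ≤ m → f m ∈ T m ∧ (T m).length ≤ g m) :
    CompTrace g f := by
  refine ⟨fun m => if m < N then [f m] else T m,
    hT.ite_lt Computable.id N fun m => [f m], fun m => ?_⟩
  by_cases hm : m < N
  · simp [hm, hg m]
  · simpa [hm] using hTf m (not_lt.1 hm)

theorem SchnorrTrivial.compTrace {A : ℕ → Bool} (hA : SchnorrTrivial A) {g : ℕ → ℕ}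
    (hg : IsOrder g) (hg1 : ∀ m, 1 ≤ g m) {f : ℕ → ℕ} (hf : TtRed f A) :
    CompTrace g f := by
  obtain ⟨h, hh, htrace⟩ := hA
  obtain ⟨L, hLc, hL, hhL⟩ := hg.exists_strictMono_le_comp (hh.1.comp Computable.succ)
  obtain ⟨T, hT, hTf⟩ := htrace _ (hf.encode_prefix hLc)
  -- trace `f m` through the prefix `f↾L(n)`, `n = firstAbove L m`, whose trace has size
  -- at most `h n ≤ g (L (n - 1)) ≤ g m`
  let entry : ℕ → ℕ → ℕ := fun m c =>
    ((Encodable.decode (α := List ℕ) c).getD []).getD m 0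
  have hentry : Computable₂ entry := ((Primrec.list_getD 0).to_comp.comp
    (Computable.option_getD (Computable.decode.comp Computable.snd) (Computable.const []))
    Computable.fst).to₂
  refine CompTrace.of_forall_ge hg1
    (Computable.list_map (hT.comp (Computable.firstAbove hL hLc)) hentry) (L 0) fun m hm => ?_
  obtain ⟨hmem, hlen⟩ := hTf (firstAbove L m)
  refine ⟨List.mem_map.2 ⟨_, hmem, ?_⟩, ?_⟩
  · simp [entry, List.getD_eq_getElem?_getD,
      List.getElem?_range (lt_apply_firstAbove hL m)]
  · obtain ⟨n, hn⟩ : ∃ n, firstAbove L m = n + 1 :=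
      Nat.exists_eq_add_one.2 ((lt_firstAbove_iff hL).2 hm)
    have hLm : L n ≤ m := (lt_firstAbove_iff hL).1 (hn ▸ n.lt_succ_self)
    rw [List.length_map]
    exact hlen.trans (hn ▸ (hhL n).trans (hg.2.1 hLm))

theorem exists_seq_isOrder_surjective :
    ∃ H : ℕ → ℕ → ℕ, (∀ i, IsOrder (H i)) ∧ ∀ g, IsOrder g → ∃ i, H i = g := by
  let E : ℕ → ℕ → ℕ := fun i n =>
    ((Denumerable.ofNat Nat.Partrec.Code i).eval n).toOption.getD 0
  refine ⟨fun i => if IsOrder (E i) then E i else id, fun i => ?_, fun g hg => ?_⟩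
  · dsimp only
    split_ifs with h
    · exact h
    · exact ⟨Computable.id, monotone_id, fun m => ⟨m, le_rfl⟩⟩
  · obtain ⟨c, hc⟩ := Nat.Partrec.Code.exists_code.1 (Partrec.nat_iff.1 hg.1)
    have hE : E (Encodable.encode c) = g := funext fun n => by simp [E, hc, Part.toOption]
    exact ⟨Encodable.encode c, by simp only [hE, hg, if_true]⟩

theorem idxOf_true_map_range {j L : ℕ} (h : j < L) :
    ((List.range L).map fun r => decide (r = j)).idxOf true = j := by
  rw [List.idxOf, List.findIdx_eq (by simpa using h)]
  simp only [List.getElem_map, List.getElem_range]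
  exact ⟨by simp, fun k hk => by simp [hk.ne]⟩

noncomputable def readColumn (T : ℕ → List ℕ) (t : ℕ → ℕ) (i : ℕ) (σ : List Bool) (k : ℕ) :
    Bool :=
  let n := firstAbove t k
  let idx :=
    ((List.range (n + 2)).map fun r => σ.getD (Nat.pair (Nat.pair i n) r) false).idxOf true
  ((Encodable.decode (α := List Bool) ((T (t n)).getD idx 0)).getD []).getD k false

section ReadColumn

variable {A B : ℕ → Bool} {H t : ℕ → ℕ} {T : ℕ → List ℕ}

theorem Computable₂.readColumn (ht : StrictMono t) (htc : Computable t) (hT : Computable T)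
    (i : ℕ) : Computable₂ (readColumn T t i) := by
  have hn : Computable fun p : List Bool × ℕ => firstAbove t p.2 :=
    (Computable.firstAbove ht htc).comp Computable.snd
  have hbits : Computable fun p : List Bool × ℕ =>
      (List.range (firstAbove t p.2 + 2)).map fun r =>
        p.1.getD (Nat.pair (Nat.pair i (firstAbove t p.2)) r) false :=
    Computable.list_map_range (Computable.succ.comp (Computable.succ.comp hn))
      ((Primrec.list_getD false).to_comp.comp (Computable.fst.comp Computable.fst)
        (Primrec₂.natPair.to_comp.comp
          (Primrec₂.natPair.to_comp.comp (Computable.const i) (hn.comp Computable.fst))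
          Computable.snd)).to₂
  have hidx := Primrec.list_idxOf.to_comp.comp (Computable.const true) hbits
  have hcode := (Primrec.list_getD 0).to_comp.comp (hT.comp (htc.comp hn)) hidx
  exact ((Primrec.list_getD false).to_comp.comp
    (Computable.option_getD (Computable.decode.comp hcode) (Computable.const []))
    Computable.snd).to₂

theorem readColumn_opre (ht : StrictMono t) (hH : Monotone H) {i : ℕ}
    (htH : ∀ n, Nat.pair (Nat.pair i (n + 1)) (n + 3) ≤ H (t n))
    (hTA : ∀ m, Encodable.encode (opre A m) ∈ T m ∧ (T m).length ≤ firstAbove t m + 1)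
    (hB : ∀ n r, B (Nat.pair (Nat.pair i n) r) =
      decide (r = (T (t n)).idxOf (Encodable.encode (opre A (t n)))))
    {k : ℕ} (hk : t 0 ≤ k) : readColumn T t i (opre B (H k)) k = A k := by
  obtain ⟨n, hn⟩ : ∃ n, firstAbove t k = n + 1 :=
    Nat.exists_eq_add_one.2 ((lt_firstAbove_iff ht).2 hk)
  have hkn : k < t (n + 1) := hn ▸ lt_apply_firstAbove ht k
  have htk : t n ≤ k := (lt_firstAbove_iff ht).1 (hn ▸ n.lt_succ_self)
  obtain ⟨hmem, hlen⟩ := hTA (t (n + 1))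
  rw [firstAbove_apply ht] at hlen
  have hidx := List.idxOf_lt_length_iff.2 hmem
  -- the block `n + 1` of column `i` lies below `H (t n) ≤ H k` and spells out the index
  have hbits : (List.range (n + 1 + 2)).map (fun r =>
      (opre B (H k)).getD (Nat.pair (Nat.pair i (n + 1)) r) false) =
      (List.range (n + 3)).map fun r =>
        decide (r = (T (t (n + 1))).idxOf (Encodable.encode (opre A (t (n + 1))))) :=
    List.map_congr_left fun r hr => by
      have hpos : Nat.pair (Nat.pair i (n + 1)) r < H k :=
        (Nat.pair_lt_pair_right _ (List.mem_range.1 hr)).trans_le ((htH n).trans (hH htk))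
      rw [getD_opre hpos, hB]
  simp only [readColumn, hn, hbits, idxOf_true_map_range (hidx.trans_le hlen),
    List.getD_eq_getElem _ _ hidx, List.getElem_idxOf, Encodable.encodek, Option.getD_some,
    getD_opre hkn]

end ReadColumn

theorem IsOrder.add_one {g : ℕ → ℕ} (hg : IsOrder g) : IsOrder fun n => g n + 1 :=
  ⟨Computable.succ.comp hg.1, fun _ _ h => Nat.succ_le_succ (hg.2.1 h),
    fun m => (hg.2.2 m).imp fun _ h => h.trans (Nat.le_succ _)⟩

theorem SchnorrTrivial.exists_tttuRed {A : ℕ → Bool} (hA : SchnorrTrivial A) :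
    ∃ B, TttuRed A B := by
  obtain ⟨H, hH, hHsurj⟩ := exists_seq_isOrder_surjective
  choose t htc ht htH using fun i => (hH i).exists_strictMono_le_comp
    (b := fun n => Nat.pair (Nat.pair i (n + 1)) (n + 3))
    (Primrec₂.natPair.to_comp.comp
      (Primrec₂.natPair.to_comp.comp (Computable.const i) Computable.succ)
      (Primrec.nat_add.to_comp.comp Computable.id (Computable.const 3)))
  choose T hT hTA using fun i => hA.compTrace (isOrder_firstAbove (ht i) (htc i)).add_one
    (fun _ => Nat.le_add_left 1 _) (ttRed_encode_opre_s17 A)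
  -- column `i` of `B` marks, in block `n`, the position of `A↾t_i(n)` in the trace `T_i (t_i n)`
  let B : ℕ → Bool := fun p =>
    let i := (Nat.unpair (Nat.unpair p).1).1
    let n := (Nat.unpair (Nat.unpair p).1).2
    decide ((Nat.unpair p).2 = (T i (t i n)).idxOf (Encodable.encode (opre A (t i n))))
  refine ⟨B, fun g hg => ?_⟩
  obtain ⟨i, rfl⟩ := hHsurj g hg
  refine ⟨fun σ k => if k < t i 0 then A k else readColumn (T i) (t i) i σ k,
    (Computable₂.readColumn (ht i) (htc i) (hT i) i).ite_lt Computable.snd (t i 0) A,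
    fun k => ?_⟩
  dsimp only
  split_ifs with hk
  · rfl
  · exact readColumn_opre (ht i) (hH i).2.1 (htH i) (hTA i)
      (fun n r => by simp only [B, Nat.unpair_pair]) (not_lt.1 hk)

theorem stmt17 (A : ℕ → Bool) : SchnorrTrivial A ↔ ∃ B, TttuRed A B :=
  ⟨SchnorrTrivial.exists_tttuRed, fun ⟨_, hAB⟩ => hAB.schnorrTrivial⟩
end
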